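/- arXiv:2402.12547 — 5 statements merged into one kernel-verified Lean document; each statement's English description precedes it below -/
import Mathlib

section
/- Let p be a prime, let m ≥ 1 and d ≥ 1 be integers, and let t = ⌈log_p m⌉ (i.e. Nat.clog p m). Then for any m × m matrix X over Z/p^d Z of p-power multiplicative order (i.e. X^(p^k) = 1 for some k ≥ 0), one has X^(p^(t+d-1)) = 1. -/
/-- A nilpotent `m × m` matrix over `ZMod p` (a field) satisfies `N ^ m = 0`. -/
theorem aux_nilpotent_pow_card_eq_zero (p m : ℕ) [Fact p.Prime]
    (N : Matrix (Fin m) (Fin m) (ZMod p)) (hN : IsNilpotent N) : N ^ m = 0 := by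
  have h1 := Matrix.isNilpotent_charpoly_sub_pow_of_isNilpotent hN
  have h2 : N.charpoly = Polynomial.X ^ (Fintype.card (Fin m)) := by
    rw [← sub_eq_zero]; exact h1.eq_zero
  have := Matrix.aeval_self_charpoly N
  rw [h2] at this
  simpa using this

/-- Binomial step: if `Y = 1 + p^j • B` with `j ≥ 1`, then
`Y ^ p = 1 + p^(j+1) • C` for some `C`. -/
theorem aux_step_lemma (p : ℕ) (m : ℕ) {R : Type*} [CommRing R]
    (B : Matrix (Fin m) (Fin m) R) (j : ℕ) (hj : 1 ≤ j) :
    ∃ C : Matrix (Fin m) (Fin m) R,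
      (1 + (p : R) ^ j • B) ^ p = 1 + (p : R) ^ (j + 1) • C := by
  have key : ∀ i : ℕ, ∃ c : ℕ, i < p →
      p ^ (j * (i + 1)) * p.choose (i + 1) = p ^ (j + 1) * c := by
    intro i
    rcases Nat.eq_zero_or_pos i with rfl | h1
    · refine ⟨1, fun _ => ?_⟩
      simp [Nat.choose_one_right, pow_succ]
    · have h2 : j + 1 ≤ j * (i + 1) := by nlinarith
      refine ⟨p ^ (j * (i + 1) - (j + 1)) * p.choose (i + 1), fun _ => ?_⟩
      have h3 : p ^ (j * (i + 1)) = p ^ (j + 1) * p ^ (j * (i + 1) - (j + 1)) := by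
        rw [← pow_add]; congr 1; omega
      rw [h3, mul_assoc]
  choose c hc using key
  set A : Matrix (Fin m) (Fin m) R := (p : R) ^ j • B with hA
  refine ⟨∑ i ∈ Finset.range p, (c i : R) • B ^ (i + 1), ?_⟩
  have comm : Commute A (1 : Matrix (Fin m) (Fin m) R) := Commute.one_right _
  have expand := comm.add_pow p
  rw [add_comm (1 : Matrix (Fin m) (Fin m) R) A, expand, Finset.sum_range_succ']
  have h0 : A ^ 0 * 1 ^ (p - 0) * (p.choose 0 : Matrix (Fin m) (Fin m) R) = 1 := by simp
  rw [h0, add_comm]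
  congr 1
  rw [Finset.smul_sum]
  refine Finset.sum_congr rfl fun i hi => ?_
  have hi' : i < p := Finset.mem_range.mp hi
  have lhs_eq : A ^ (i + 1) * 1 ^ (p - (i + 1)) * (p.choose (i + 1) : Matrix (Fin m) (Fin m) R)
      = ((p ^ (j * (i + 1)) * p.choose (i + 1) : ℕ) : R) • B ^ (i + 1) := by
    rw [hA, smul_pow, one_pow, mul_one, ← pow_mul]
    push_cast
    rw [smul_mul_assoc, mul_smul]
    congr 1
    rw [← (Nat.cast_commute (p.choose (i + 1)) (B ^ (i + 1))).eq, ← nsmul_eq_mul,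
      Nat.cast_smul_eq_nsmul]
  rw [lhs_eq, hc i hi']
  push_cast
  rw [mul_smul]

/-- Proposition 2.5: if `X` is an `m × m` matrix over `ℤ/p^d ℤ` of `p`-power
multiplicative order and `t = ⌈log_p m⌉`, then `X ^ (p ^ (t + d - 1)) = 1`. -/
theorem pow_eq_one_of_pPow_order_matrix_zmod (p : ℕ) (hp : p.Prime) (m d : ℕ)
    (hm : 1 ≤ m) (hd : 1 ≤ d)
    (X : Matrix (Fin m) (Fin m) (ZMod (p ^ d))) (h : ∃ k : ℕ, X ^ p ^ k = 1) :
    X ^ p ^ (Nat.clog p m + d - 1) = 1 := by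
  obtain ⟨k, hk⟩ := h
  haveI : Fact p.Prime := ⟨hp⟩
  haveI : Nonempty (Fin m) := ⟨⟨0, hm⟩⟩
  haveI : NeZero (p ^ d) := ⟨pow_ne_zero _ hp.pos.ne'⟩
  have hp1 : 1 < p := hp.one_lt
  have hpd : p ∣ p ^ d := dvd_pow_self p (by omega)
  set t := Nat.clog p m with ht
  let f : ZMod (p ^ d) →+* ZMod p := ZMod.castHom hpd (ZMod p)
  set Xb : Matrix (Fin m) (Fin m) (ZMod p) := f.mapMatrix X with hXb
  -- Step 1: over ZMod p, Xb ^ (p ^ t) = 1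
  have h1 : Xb ^ p ^ k = 1 := by
    rw [hXb, ← map_pow, hk, map_one]
  have h2 : (Xb - 1) ^ p ^ k = Xb ^ p ^ k - 1 ^ p ^ k :=
    sub_pow_char_pow_of_commute p _ (Commute.one_right Xb)
  have hnil : IsNilpotent (Xb - 1) := ⟨p ^ k, by rw [h2, h1, one_pow, sub_self]⟩
  have hNm : (Xb - 1) ^ m = 0 := aux_nilpotent_pow_card_eq_zero p m _ hnil
  have hmt : m ≤ p ^ t := Nat.le_pow_clog hp1 m
  have h3 : (Xb - 1) ^ p ^ t = 0 := by
    calc (Xb - 1) ^ p ^ t = (Xb - 1) ^ m * (Xb - 1) ^ (p ^ t - m) := by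
          rw [← pow_add]; congr 1; omega
      _ = 0 := by rw [hNm, zero_mul]
  have h4 : Xb ^ p ^ t = 1 := by
    have h5 : (Xb - 1) ^ p ^ t = Xb ^ p ^ t - 1 ^ p ^ t :=
      sub_pow_char_pow_of_commute p _ (Commute.one_right Xb)
    rw [h3, one_pow] at h5
    have := sub_eq_zero.mp h5.symm
    exact this
  -- Step 2: lift, Y = X ^ (p ^ t) = 1 + p • B over ZMod (p ^ d)
  set Y := X ^ p ^ t with hY
  have hfY : f.mapMatrix Y = 1 := by rw [hY, map_pow]; exact h4
  have hent : ∀ i j : Fin m, ∃ b : ZMod (p ^ d),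
      (Y - 1) i j = (p : ZMod (p ^ d)) * b := by
    intro i j
    have h5 : f ((Y - 1) i j) = 0 := by
      have h6 : f.mapMatrix (Y - 1) = 0 := by rw [map_sub, hfY, map_one, sub_self]
      have h7 : f ((Y - 1) i j) = (f.mapMatrix (Y - 1)) i j := rfl
      rw [h7, h6]; rfl
    set a := (Y - 1) i j with ha
    have hav : ((a.val : ℕ) : ZMod (p ^ d)) = a := ZMod.natCast_zmod_val a
    have h8 : ((a.val : ℕ) : ZMod p) = 0 := by
      rw [← map_natCast f, hav]; exact h5
    obtain ⟨e, he⟩ := (ZMod.natCast_eq_zero_iff _ _).mp h8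
    refine ⟨(e : ZMod (p ^ d)), ?_⟩
    rw [← hav, he]
    push_cast
    ring
  choose B hB using hent
  have hYB : Y = 1 + (p : ZMod (p ^ d)) ^ 1 • Matrix.of B := by
    ext i j
    have h9 := hB i j
    rw [Matrix.sub_apply] at h9
    rw [Matrix.add_apply, Matrix.smul_apply, Matrix.of_apply, pow_one, smul_eq_mul]
    linear_combination h9
  -- Step 3: induction, Y ^ (p ^ n) = 1 + p^(n+1) • C
  have main : ∀ n : ℕ, ∃ C : Matrix (Fin m) (Fin m) (ZMod (p ^ d)),
      Y ^ p ^ n = 1 + (p : ZMod (p ^ d)) ^ (n + 1) • C := by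
    intro n
    induction n with
    | zero => exact ⟨Matrix.of B, by rw [pow_zero, pow_one]; exact hYB⟩
    | succ n ih =>
        obtain ⟨C, hC⟩ := ih
        obtain ⟨C', hC'⟩ := aux_step_lemma p m C (n + 1) (by omega)
        exact ⟨C', by rw [pow_succ, pow_mul, hC, hC']⟩
  obtain ⟨C, hC⟩ := main (d - 1)
  have hzero : ((p : ZMod (p ^ d)) : ZMod (p ^ d)) ^ (d - 1 + 1) = 0 := by
    rw [Nat.sub_add_cancel hd]
    have : ((p ^ d : ℕ) : ZMod (p ^ d)) = 0 := ZMod.natCast_self _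
    push_cast at this
    exact this
  have hfinal : Y ^ p ^ (d - 1) = 1 := by
    rw [hC, hzero, zero_smul, add_zero]
  calc X ^ p ^ (t + d - 1) = X ^ (p ^ t * p ^ (d - 1)) := by
        rw [← pow_add]; congr 2; omega
    _ = Y ^ p ^ (d - 1) := by rw [hY, ← pow_mul]
    _ = 1 := hfinal
end

section
/- Let n ≥ 2 be an integer and let N be an abelian group of order 2^n. Suppose that the holomorph Hol(N) contains a regular subgroup isomorphic to the generalised quaternion group Q_{2^n} or to the dihedral group D_{2^n} of order 2^n. Then N is isomorphic to one of the following groups: C_{2^n}; C_2 × C_{2^{n-1}}; C_4 × C_{2^{n-2}} (only possible when n ≥ 3); C_2 × C_2 × C_{2^{n-2}} (only possible when n ≥ 3); C_2 × C_2 × C_2 × C_{2^{n-3}} (only possible when n ≥ 4). -/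
/-!
A regular subgroup isomorphic to `Q_{2^n}` or `D_{2^n}` contains an element `ρ = (v, A)` of
order `2^(n-1)`, and regularity forces `ρ^(2^(n-2)) • 0 = ∑_{i < 2^(n-2)} A^i v ≠ 0`.
If `2^(n-2)` kills `N` and `n ≥ 5`, this sum vanishes: `A` has `2`-power order, so `f = A - 1`
is nilpotent; the sum is `∑_j C(2^(n-2), j+1) f^j`, and if `2^t` exactly divides `j + 1`,
then `2^(n-2-t)` divides the binomial coefficient while `f^j` kills `2^(n-2-t) N`,
a subgroup of order at most `2^(2^t - 1)` by counting the `2`-ranks of the subgroups `2^i N`.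
So either `N` has an element of order `2^(n-1)` or `2^n`, or `n ≤ 4`; in each case `N` is
identified by splitting off a cyclic subgroup of maximal order as a direct summand.
-/

/-- The natural action of `AddAut N` on `Multiplicative N`. -/
def holPhi (N : Type) [AddCommGroup N] : Multiplicative (AddAut N) →* MulAut (Multiplicative N) where
  toFun f := AddEquiv.toMultiplicative (Multiplicative.toAdd f)
  map_one' := by ext x; rfl
  map_mul' f g := by ext x; rfl

/-- The holomorph of an abelian group `N`, i.e. the semidirect product `N ⋊ Aut(N)`. -/
abbrev Hol (N : Type) [AddCommGroup N] :=
  SemidirectProduct (Multiplicative N) (Multiplicative (AddAut N)) (holPhi N)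

/-- The action of the holomorph on `N`: `(v, A) • x = v + A x`. -/
def holSmul {N : Type} [AddCommGroup N] (g : Hol N) (x : N) : N :=
  (Multiplicative.toAdd g.left) + (Multiplicative.toAdd g.right) x

/-- A subgroup of `Hol N` is regular if its action on `N` is simply transitive. -/
def IsRegularSubgroup {N : Type} [AddCommGroup N] (G : Subgroup (Hol N)) : Prop :=
  ∀ x y : N, ∃! g : G, holSmul (g : Hol N) x = y

open Finset

theorem isNilpotent_sub_one_of_pow_prime_pow_eq_one {R : Type*} [Ring R] {p e m : ℕ}
    (hp : p.Prime) (hpe : (p : R) ^ e = 0) {a : R} (ha : a ^ p ^ m = 1) :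
    IsNilpotent (a - 1) := by
  -- expanding `((a - 1) + 1) ^ p ^ m = 1` shows that `(a - 1) ^ p ^ m` is a multiple of `p`
  obtain ⟨r, hr⟩ := (Commute.one_right (a - 1)).exists_add_pow_prime_pow_eq hp m
  rw [sub_add_cancel, ha, one_pow, eq_comm, add_right_comm, add_eq_right] at hr
  refine ⟨p ^ m * e, ?_⟩
  rw [pow_mul, eq_neg_of_add_eq_zero_left hr, mul_one, mul_assoc, ← mul_neg,
    (Nat.cast_commute p _).mul_pow, hpe, zero_mul]

theorem geom_sum_add_one_eq_sum_choose {R : Type*} [Semiring R] (x : R) (k : ℕ) :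
    ∑ i ∈ range k, (x + 1) ^ i = ∑ j ∈ range k, (k.choose (j + 1) : R) * x ^ j := by
  induction k with
  | zero => simp
  | succ k ih =>
    rw [sum_range_succ, ih, (Commute.one_right x).add_pow, sum_range_succ (fun j => _ * x ^ j)]
    simp only [one_pow, mul_one, Nat.choose_succ_succ', Nat.cast_add, add_mul, sum_add_distrib]
    rw [sum_range_succ (fun j => x ^ j * _), Nat.choose_succ_self, Nat.cast_zero, zero_mul,
      add_zero]
    simp only [← Nat.cast_comm]
    abel

theorem Nat.pow_sub_multiplicity_dvd_choose_prime_pow {p n k : ℕ} (hp : p.Prime) (hk0 : k ≠ 0)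
    (hkn : k ≤ p ^ n) : p ^ (n - multiplicity p k) ∣ (p ^ n).choose k :=
  pow_dvd_of_le_emultiplicity (hp.emultiplicity_choose_prime_pow hkn hk0).ge

theorem Nat.two_mul_le_of_dvd_of_ne {a b : ℕ} (hb : 0 < b) (hab : a ∣ b) (hne : a ≠ b) :
    2 * a ≤ b := by
  obtain ⟨c, rfl⟩ := hab
  rcases c with _ | _ | c
  · omega
  · simp at hne
  · nlinarith

theorem Nat.two_mul_le_two_pow (t : ℕ) : 2 * t ≤ 2 ^ t := by
  rcases t with _ | t
  · simp
  · have := Nat.lt_two_pow_self (n := t)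
    rw [pow_succ]
    omega

section FiniteAbelianGroup

variable {N : Type*} [AddCommGroup N]

theorem AddSubgroup.map_pow_eq_bot_of_card_le_two_pow [Finite N] {f : AddMonoid.End N}
    (hf : IsNilpotent f) {m : ℕ} {X : AddSubgroup N} (hX : X.map f ≤ X)
    (hcard : Nat.card X ≤ 2 ^ m) : X.map (f ^ m) = ⊥ := by
  have map_mul : ∀ (Y : AddSubgroup N) (g h : AddMonoid.End N), Y.map (g * h) = (Y.map h).map g :=
    fun Y g h => (Y.map_map g h).symm
  induction m generalizing X with
  | zero => rw [pow_zero, AddSubgroup.eq_bot_of_card_le X (by simpa using hcard)]; exact map_bot _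
  | succ m ih =>
    rw [pow_succ, map_mul]
    by_cases hfX : X.map f = X
    · obtain ⟨K, hK⟩ := hf
      have hpow : ∀ k : ℕ, X.map (f ^ k) = X := by
        intro k
        induction k with
        | zero => exact AddSubgroup.map_id X
        | succ k ihk => rw [pow_succ, map_mul, hfX, ihk]
      have hX0 : X = ⊥ := by rw [← hpow K, hK]; exact AddSubgroup.map_zero_eq_bot X
      rw [hfX, hX0]
      exact AddSubgroup.map_bot _
    · refine ih (AddSubgroup.map_mono hX) ?_
      have := Nat.two_mul_le_of_dvd_of_ne Nat.card_pos (AddSubgroup.card_dvd_of_le hX)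
        fun h => hfX (AddSubgroup.eq_of_le_of_card_ge hX h.ge)
      rw [pow_succ] at hcard
      omega

variable (N) in
def nsmulRange (k : ℕ) : AddSubgroup N := (nsmulAddMonoidHom k : N →+ N).range

theorem nsmulRange_one : nsmulRange N 1 = ⊤ :=
  eq_top_iff.2 fun y _ => ⟨y, one_nsmul y⟩

theorem map_nsmulRange_le (f : N →+ N) (k : ℕ) : (nsmulRange N k).map f ≤ nsmulRange N k := by
  rintro _ ⟨_, ⟨x, rfl⟩, rfl⟩
  exact ⟨f x, (map_nsmul f k x).symm⟩

theorem map_nsmulRange_pow (p i : ℕ) :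
    (nsmulRange N (p ^ i)).map (nsmulAddMonoidHom p) = nsmulRange N (p ^ (i + 1)) := by
  rw [nsmulRange, ← AddMonoidHom.range_comp, pow_succ', nsmulRange]
  congr 1
  ext x
  exact (mul_smul p (p ^ i) x).symm

theorem nsmulRange_pow_antitone (p : ℕ) : Antitone fun i => nsmulRange N (p ^ i) :=
  antitone_nat_of_succ_le fun i => by
    rw [← map_nsmulRange_pow]; exact map_nsmulRange_le _ _

/-- For `p` prime, `p` to the number of cyclic factors of `p ^ i • N`. -/
noncomputable def nsmulRangeTorsionCard (N : Type*) [AddCommGroup N] (p i : ℕ) : ℕ :=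
  Nat.card ↥(nsmulRange N (p ^ i) ⊓ (nsmulAddMonoidHom p : N →+ N).ker)

theorem nsmulRangeTorsionCard_antitone [Finite N] (p : ℕ) :
    Antitone (nsmulRangeTorsionCard N p) := fun _ _ hij =>
  AddSubgroup.card_le_of_le (inf_le_inf_right _ (nsmulRange_pow_antitone p hij))

theorem card_nsmulRange_pow_eq_mul [Finite N] (p i : ℕ) :
    Nat.card (nsmulRange N (p ^ i)) =
      Nat.card (nsmulRange N (p ^ (i + 1))) * nsmulRangeTorsionCard N p i := by
  let X := nsmulRange N (p ^ i)
  let g := (nsmulAddMonoidHom p : N →+ N).comp X.subtype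
  have hrange : g.range = nsmulRange N (p ^ (i + 1)) := by
    rw [AddMonoidHom.range_comp, AddSubgroup.range_subtype, map_nsmulRange_pow]
  have hker : Nat.card g.ker = nsmulRangeTorsionCard N p i := by
    rw [← AddSubgroup.card_map_of_injective X.subtype_injective, ← AddMonoidHom.comap_ker,
      AddSubgroup.map_comap_eq, AddSubgroup.range_subtype, nsmulRangeTorsionCard]
  rw [← g.ker.card_mul_index, AddSubgroup.index_ker, hrange, hker, mul_comm]

theorem card_nsmulRange_pow_le [Finite N] (p i d : ℕ) :
    Nat.card (nsmulRange N (p ^ i)) ≤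
      nsmulRangeTorsionCard N p i ^ d * Nat.card (nsmulRange N (p ^ (i + d))) := by
  induction d with
  | zero => simp
  | succ d ih =>
    calc Nat.card (nsmulRange N (p ^ i))
        ≤ nsmulRangeTorsionCard N p i ^ d * Nat.card (nsmulRange N (p ^ (i + d))) := ih
      _ = nsmulRangeTorsionCard N p i ^ d * (Nat.card (nsmulRange N (p ^ (i + d + 1))) *
            nsmulRangeTorsionCard N p (i + d)) := by rw [card_nsmulRange_pow_eq_mul]
      _ ≤ nsmulRangeTorsionCard N p i ^ d * (Nat.card (nsmulRange N (p ^ (i + d + 1))) *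
            nsmulRangeTorsionCard N p i) := by
        gcongr
        exact nsmulRangeTorsionCard_antitone p (Nat.le_add_right i d)
      _ = _ := by rw [← add_assoc]; ring

theorem le_card_nsmulRange_pow [Finite N] (p i d : ℕ) :
    nsmulRangeTorsionCard N p (i + d) ^ d * Nat.card (nsmulRange N (p ^ (i + d))) ≤
      Nat.card (nsmulRange N (p ^ i)) := by
  induction d generalizing i with
  | zero => simp
  | succ d ih =>
    calc nsmulRangeTorsionCard N p (i + (d + 1)) ^ (d + 1) *
          Nat.card (nsmulRange N (p ^ (i + (d + 1))))
        = nsmulRangeTorsionCard N p (i + 1 + d) ^ d *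
            Nat.card (nsmulRange N (p ^ (i + 1 + d))) * nsmulRangeTorsionCard N p (i + 1 + d) := by
          rw [show i + (d + 1) = i + 1 + d by omega]; ring
      _ ≤ Nat.card (nsmulRange N (p ^ (i + 1))) * nsmulRangeTorsionCard N p i := by
          gcongr
          · exact ih (i + 1)
          · exact nsmulRangeTorsionCard_antitone p (by omega)
      _ = _ := (card_nsmulRange_pow_eq_mul p i).symm

theorem card_nsmulRange_two_pow_le [Finite N] {n r t : ℕ} (hn : 5 ≤ n)
    (hN : Nat.card N = 2 ^ n) (hexp : ∀ y : N, 2 ^ (n - 2) • y = 0) (hrt : r + t = n - 2) :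
    Nat.card (nsmulRange N (2 ^ r)) ≤ 2 ^ (2 ^ t - 1) := by
  have hpow : ∀ H : AddSubgroup N, ∃ k ≤ n, Nat.card H = 2 ^ k := fun H =>
    (Nat.dvd_prime_pow Nat.prime_two).1 (hN ▸ H.card_addSubgroup_dvd_card)
  obtain ⟨x, -, hx⟩ := hpow (nsmulRange N (2 ^ r))
  obtain ⟨a, -, ha⟩ := hpow (nsmulRange N (2 ^ r) ⊓ (nsmulAddMonoidHom 2).ker)
  change nsmulRangeTorsionCard N 2 r = 2 ^ a at ha
  rw [hx]
  refine Nat.pow_le_pow_right two_pos ?_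
  have ht := Nat.two_mul_le_two_pow t
  -- if `a ≤ 1` then `2 ^ r • N` is cyclic; otherwise `|N| ≥ 4 ^ r * |2 ^ r • N|`
  rcases le_or_gt a 1 with ha1 | ha1
  · have hbot : nsmulRange N (2 ^ (r + t)) = ⊥ :=
      eq_bot_iff.2 fun _ ⟨y, hy⟩ => hy ▸ hrt ▸ hexp y
    have := card_nsmulRange_pow_le (N := N) 2 r t
    rw [hbot, AddSubgroup.card_bot, mul_one, hx, ha, ← pow_mul,
      Nat.pow_le_pow_iff_right one_lt_two] at this
    interval_cases a <;> omega
  · have := le_card_nsmulRange_pow (N := N) 2 0 r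
    rw [zero_add, pow_zero, nsmulRange_one, AddSubgroup.card_top, hN, hx, ha, ← pow_mul, ← pow_add,
      Nat.pow_le_pow_iff_right one_lt_two] at this
    have : 2 * r ≤ a * r := Nat.mul_le_mul_right r ha1
    omega

theorem geom_sum_eq_zero_of_card_eq_two_pow [Finite N] {n m : ℕ} (hn : 5 ≤ n)
    (hN : Nat.card N = 2 ^ n) (hexp : ∀ y : N, 2 ^ (n - 2) • y = 0) {a : AddMonoid.End N}
    (ha : a ^ 2 ^ m = 1) : ∑ i ∈ range (2 ^ (n - 2)), a ^ i = 0 := by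
  have h2 : ((2 : ℕ) : AddMonoid.End N) ^ (n - 2) = 0 := by
    ext y
    rw [← Nat.cast_pow, AddMonoid.End.natCast_apply]
    exact hexp y
  have hf := isNilpotent_sub_one_of_pow_prime_pow_eq_one Nat.prime_two h2 ha
  rw [← sub_add_cancel a 1, geom_sum_add_one_eq_sum_choose]
  refine sum_eq_zero fun j hj => ?_
  set f := a - 1
  set t := multiplicity 2 (j + 1)
  have h2t : 2 ^ t ≤ j + 1 := Nat.le_of_dvd j.succ_pos (pow_multiplicity_dvd 2 (j + 1))
  have hj : j + 1 ≤ 2 ^ (n - 2) := mem_range.1 hj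
  have ht : t ≤ n - 2 := (Nat.pow_le_pow_iff_right one_lt_two).1 (h2t.trans hj)
  obtain ⟨c, hc⟩ : 2 ^ (n - 2 - t) ∣ (2 ^ (n - 2)).choose (j + 1) :=
    Nat.pow_sub_multiplicity_dvd_choose_prime_pow Nat.prime_two j.succ_ne_zero hj
  have hbot := AddSubgroup.map_pow_eq_bot_of_card_le_two_pow hf (map_nsmulRange_le f _)
    (card_nsmulRange_two_pow_le hn hN hexp (Nat.sub_add_cancel ht))
  ext x
  have hkill : (f ^ (2 ^ t - 1)) (2 ^ (n - 2 - t) • x) = 0 :=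
    (AddSubgroup.mem_bot).1 (hbot ▸ AddSubgroup.mem_map_of_mem _ ⟨x, rfl⟩)
  rw [← pow_sub_mul_pow f (show 2 ^ t - 1 ≤ j by omega), hc, mul_comm, Nat.cast_mul, mul_assoc]
  simp only [AddMonoid.End.coe_mul, Function.comp_apply, AddMonoid.End.natCast_apply,
    ← map_nsmul, hkill, map_zero]
  rfl

end FiniteAbelianGroup

theorem SemidirectProduct.right_pow {K H : Type*} [Group K] [Group H] {φ : H →* MulAut K}
    (g : K ⋊[φ] H) (k : ℕ) : (g ^ k).right = g.right ^ k :=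
  map_pow rightHom g k

def autToEnd (N : Type*) [AddCommGroup N] : Multiplicative (AddAut N) →* AddMonoid.End N where
  toFun a := (Multiplicative.toAdd a : N ≃+ N).toAddMonoidHom
  map_one' := rfl
  map_mul' _ _ := rfl

section Holomorph

variable {N : Type} [AddCommGroup N]

theorem holSmul_one (x : N) : holSmul (1 : Hol N) x = x := by
  simp [holSmul]

theorem holSmul_pow_zero (g : Hol N) (k : ℕ) :
    holSmul (g ^ k) 0 = (∑ i ∈ range k, autToEnd N g.right ^ i) (Multiplicative.toAdd g.left) := by
  induction k with
  | zero => simp [holSmul]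
  | succ k ih =>
    rw [sum_range_succ]
    simp only [holSmul, map_zero, add_zero] at ih ⊢
    rw [pow_succ, SemidirectProduct.mul_left, toAdd_mul, ih, ← map_pow,
      ← SemidirectProduct.right_pow]
    rfl

theorem IsRegularSubgroup.eq_one_of_holSmul_eq_self {G : Subgroup (Hol N)}
    (hG : IsRegularSubgroup G) {g : G} {x : N} (hg : holSmul (g : Hol N) x = x) : g = 1 :=
  (hG x x).unique hg (holSmul_one x)

theorem exists_two_pow_nsmul_ne_zero_of_isRegularSubgroup {n : ℕ} (hn : 5 ≤ n)
    (hN : Nat.card N = 2 ^ n) {G : Subgroup (Hol N)} (hG : IsRegularSubgroup G) {ρ : G}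
    (hρ : orderOf ρ = 2 ^ (n - 1)) : ∃ y : N, 2 ^ (n - 2) • y ≠ 0 := by
  have : Finite N := Nat.finite_of_card_ne_zero (by simp [hN])
  by_contra! hexp
  have ha : autToEnd N (ρ : Hol N).right ^ 2 ^ (n - 1) = 1 := by
    rw [← map_pow, ← SemidirectProduct.right_pow, ← Subgroup.coe_pow, ← hρ, pow_orderOf_eq_one]
    rfl
  have hfix : holSmul ((ρ ^ 2 ^ (n - 2) : G) : Hol N) 0 = 0 := by
    rw [Subgroup.coe_pow, holSmul_pow_zero, geom_sum_eq_zero_of_card_eq_two_pow hn hN hexp ha]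
    rfl
  refine pow_ne_one_of_lt_orderOf (by positivity) ?_ (hG.eq_one_of_holSmul_eq_self hfix)
  rw [hρ]
  exact Nat.pow_lt_pow_right one_lt_two (by omega)

end Holomorph

theorem exists_orderOf_eq_two_pow_pred {G : Type*} [Group G] {n : ℕ} (hn : 2 ≤ n)
    (hiso : Nonempty (G ≃* QuaternionGroup (2 ^ (n - 2))) ∨
      Nonempty (G ≃* DihedralGroup (2 ^ (n - 1)))) :
    ∃ ρ : G, orderOf ρ = 2 ^ (n - 1) := by
  rcases hiso with ⟨⟨e⟩⟩ | ⟨⟨e⟩⟩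
  · refine ⟨e.symm (QuaternionGroup.a 1), ?_⟩
    rw [MulEquiv.orderOf_eq, QuaternionGroup.orderOf_a_one, ← pow_succ']
    congr 1
    omega
  · exact ⟨e.symm (DihedralGroup.r 1), by rw [MulEquiv.orderOf_eq, DihedralGroup.orderOf_r_one]⟩

section Classification

open AddSubgroup

variable {N : Type*} [AddCommGroup N]

theorem exists_nsmul_sub_zsmul_eq_zero {x z : N} {q : ℕ} (hx : addOrderOf x ≠ 0)
    (hq : q ∣ addOrderOf x) (hxz : addOrderOf x • z = 0) (hqz : q • z ∈ zmultiples x) :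
    ∃ d : ℤ, q • (z - d • x) = 0 := by
  obtain ⟨c, hc⟩ := mem_zmultiples_iff.1 hqz
  obtain ⟨r, hr⟩ := hq
  obtain ⟨d, rfl⟩ : (q : ℤ) ∣ c := by
    have : (addOrderOf x : ℤ) ∣ r * c := by
      rw [addOrderOf_dvd_iff_zsmul_eq_zero, mul_smul, hc, ← natCast_zsmul, ← mul_smul,
        ← Nat.cast_mul, natCast_zsmul, mul_comm, ← hr, hxz]
    rw [hr, Nat.cast_mul, mul_comm] at this
    exact Int.dvd_of_mul_dvd_mul_left (Int.natCast_ne_zero.2 (right_ne_zero_of_mul (hr ▸ hx))) this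
  refine ⟨d, ?_⟩
  rw [smul_sub, ← hc, ← natCast_zsmul, mul_smul, sub_self]

theorem exists_prime_addOrderOf_notMem_zmultiples [Finite N] {x : N}
    (hx : ∀ y : N, addOrderOf x • y = 0) {z : N} (hz : z ∉ zmultiples x) :
    ∃ y : N, (addOrderOf y).Prime ∧ y ∉ zmultiples x := by
  -- pass from `z` to `q • z` until `q • z ∈ ⟨x⟩`, then correct `z` by a multiple of `x`
  induction h : addOrderOf z using Nat.strong_induction_on generalizing z with
  | _ k ih =>
  obtain ⟨q, hq, hqk⟩ := Nat.exists_prime_and_dvd (n := k) fun hk =>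
    hz (AddMonoid.addOrderOf_eq_one_iff.1 (h.trans hk) ▸ zero_mem _)
  have hk0 : k ≠ 0 := h ▸ (addOrderOf_pos z).ne'
  by_cases hqz : q • z ∈ zmultiples x
  · have hqx : q ∣ addOrderOf x := hqk.trans (h ▸ addOrderOf_dvd_of_nsmul_eq_zero (hx z))
    obtain ⟨d, hd⟩ := exists_nsmul_sub_zsmul_eq_zero (addOrderOf_pos x).ne' hqx (hx z) hqz
    have hy : z - d • x ∉ zmultiples x := fun hy =>
      hz (by simpa using add_mem hy (zsmul_mem (mem_zmultiples x) d))
    have : Fact q.Prime := ⟨hq⟩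
    refine ⟨z - d • x, ?_, hy⟩
    rw [addOrderOf_eq_prime hd fun h0 => hy (h0 ▸ zero_mem _)]
    exact hq
  · refine ih _ ?_ hqz rfl
    rw [addOrderOf_nsmul_of_dvd hq.ne_zero (h ▸ hqk), h]
    exact Nat.div_lt_self (Nat.pos_of_ne_zero hk0) hq.one_lt

theorem disjoint_zmultiples_of_prime_addOrderOf [Finite N] {H : AddSubgroup N} {y : N}
    (hy : (addOrderOf y).Prime) (hyH : y ∉ H) : Disjoint H (zmultiples y) := by
  rw [disjoint_iff, inf_comm]
  have hdvd := card_dvd_of_le (inf_le_left : zmultiples y ⊓ H ≤ zmultiples y)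
  rw [Nat.card_zmultiples] at hdvd
  rcases hy.eq_one_or_self_of_dvd _ hdvd with h1 | hq
  · exact AddSubgroup.card_eq_one.1 h1
  · refine absurd ?_ hyH
    have := eq_of_le_of_card_ge (inf_le_left : zmultiples y ⊓ H ≤ zmultiples y)
      (by rw [hq, Nat.card_zmultiples])
    exact (inf_eq_left.1 this) (mem_zmultiples y)

theorem addOrderOf_mk_eq_of_disjoint {H : AddSubgroup N} {x : N} (hx : Disjoint (zmultiples x) H) :
    addOrderOf (x : N ⧸ H) = addOrderOf x := by
  refine (addOrderOf_map_dvd (QuotientAddGroup.mk' H) x).antisymm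
    (addOrderOf_dvd_of_nsmul_eq_zero ?_)
  refine disjoint_def.1 hx (nsmul_mem (mem_zmultiples x) _) ?_
  rw [← QuotientAddGroup.eq_zero_iff, QuotientAddGroup.mk_nsmul]
  exact addOrderOf_nsmul_eq_zero _

theorem exists_disjoint_zmultiples_of_addOrderOf_nsmul_eq_zero [Finite N] (x : N)
    (hx : ∀ y : N, addOrderOf x • y = 0) :
    ∃ K : AddSubgroup N, Disjoint (zmultiples x) K ∧ addOrderOf x * Nat.card K = Nat.card N := by
  -- split off `y` of prime order outside `⟨x⟩` and induct on `N ⧸ ⟨y⟩`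
  induction h : Nat.card N using Nat.strong_induction_on generalizing N with
  | _ c ih =>
  by_cases htop : ∀ z, z ∈ zmultiples x
  · refine ⟨⊥, disjoint_bot_right, ?_⟩
    rw [card_bot, mul_one, ← h, ← Nat.card_zmultiples, (eq_top_iff' _).2 htop, card_top]
  push Not at htop
  obtain ⟨z, hz⟩ := htop
  obtain ⟨y, hy, hyx⟩ := exists_prime_addOrderOf_notMem_zmultiples hx hz
  have hdisj := disjoint_zmultiples_of_prime_addOrderOf hy hyx
  set Y := zmultiples y
  have hcardN : Nat.card N = Nat.card (N ⧸ Y) * addOrderOf y := by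
    rw [Y.card_eq_card_quotient_mul_card_addSubgroup, Nat.card_zmultiples]
  have hord := addOrderOf_mk_eq_of_disjoint hdisj
  obtain ⟨K', hK'x, hK'card⟩ := ih (Nat.card (N ⧸ Y))
    (h ▸ hcardN ▸ lt_mul_right Nat.card_pos hy.one_lt) (x : N ⧸ Y)
    (fun w => QuotientAddGroup.induction_on w fun w => by
      rw [hord, ← QuotientAddGroup.mk_nsmul, hx]; rfl) rfl
  let π := QuotientAddGroup.mk' Y
  refine ⟨K'.comap π, disjoint_def.2 fun {w} hwx hwK => ?_, ?_⟩
  · have hπw : π w = 0 := disjoint_def.1 hK'x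
      (π.map_zmultiples x ▸ mem_map_of_mem π hwx) hwK
    exact disjoint_def.1 hdisj hwx ((QuotientAddGroup.eq_zero_iff w).1 hπw)
  · have hidx := index_comap_of_surjective K' (QuotientAddGroup.mk'_surjective Y)
    have hK : Nat.card (K'.comap π) = Nat.card K' * addOrderOf y := by
      refine Nat.eq_of_mul_eq_mul_right (Nat.pos_of_ne_zero (index_ne_zero_of_finite (H := K'))) ?_
      rw [← hidx, (K'.comap π).card_mul_index, mul_right_comm, hidx, K'.card_mul_index, hcardN]
    rw [← h, hK, ← mul_assoc, ← hord, hK'card, hcardN]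

theorem nonempty_addEquiv_prod_of_disjoint [Finite N] {H K : AddSubgroup N} (hHK : Disjoint H K)
    (hcard : Nat.card H * Nat.card K = Nat.card N) : Nonempty (N ≃+ H × K) := by
  let φ := H.subtype.coprod K.subtype
  have hinj : Function.Injective φ := by
    rw [injective_iff_map_eq_zero]
    rintro ⟨h, k⟩ hhk
    have hk : (k : N) = -h := eq_neg_of_add_eq_zero_right hhk
    have hk0 : (k : N) = 0 := disjoint_def.1 hHK (hk ▸ neg_mem h.2) k.2
    have hh0 : (h : N) = 0 := by rw [hk0, zero_eq_neg] at hk; exact hk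
    ext <;> assumption
  exact ⟨(AddEquiv.ofBijective φ ((Nat.bijective_iff_injective_and_card φ).2
    ⟨hinj, by rw [Nat.card_prod, hcard]⟩)).symm⟩

theorem exists_addEquiv_zmod_addOrderOf_prod [Finite N] (x : N)
    (hx : ∀ y : N, addOrderOf x • y = 0) :
    ∃ K : AddSubgroup N, addOrderOf x * Nat.card K = Nat.card N ∧
      Nonempty (N ≃+ ZMod (addOrderOf x) × K) := by
  obtain ⟨K, hdisj, hcard⟩ := exists_disjoint_zmultiples_of_addOrderOf_nsmul_eq_zero x hx
  obtain ⟨e⟩ := nonempty_addEquiv_prod_of_disjoint hdisj (by rwa [Nat.card_zmultiples])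
  let ex : ZMod (addOrderOf x) ≃+ zmultiples x :=
    zmodAddEquivOfGenerator (g := ⟨x, mem_zmultiples x⟩) (fun ⟨_, k, hk⟩ => ⟨k, Subtype.ext hk⟩)
      (Nat.card_zmultiples x)
  exact ⟨K, hcard, ⟨e.trans ((ex.symm).prodCongr (AddEquiv.refl K))⟩⟩

theorem nonempty_addEquiv_of_nsmul_eq_zero {M M' : Type*} [AddCommGroup M] [AddCommGroup M']
    [Finite M] {p : ℕ} [hp : Fact p.Prime] (hM : ∀ x : M, p • x = 0) (hM' : ∀ x : M', p • x = 0)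
    (hcard : Nat.card M = Nat.card M') : Nonempty (M ≃+ M') := by
  have : Finite M' := Nat.finite_of_card_ne_zero (hcard ▸ Nat.card_pos.ne')
  -- `AddCommGroup.zmodModule` is defined by cases on `p`, which must be exposed as a successor
  obtain ⟨q, rfl⟩ := Nat.exists_eq_add_one.2 hp.out.pos
  let := AddCommGroup.zmodModule hM
  let := AddCommGroup.zmodModule hM'
  have hrank : Module.finrank (ZMod (q + 1)) M = Module.finrank (ZMod (q + 1)) M' := by
    have hM : Nat.card M = Nat.card (ZMod (q + 1)) ^ Module.finrank (ZMod (q + 1)) M :=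
      Module.natCard_eq_pow_finrank
    have hM' : Nat.card M' = Nat.card (ZMod (q + 1)) ^ Module.finrank (ZMod (q + 1)) M' :=
      Module.natCard_eq_pow_finrank
    rw [Nat.card_zmod] at hM hM'
    exact Nat.pow_right_injective hp.out.two_le (hM.symm.trans (hcard.trans hM'))
  exact ⟨(LinearEquiv.ofFinrankEq M M' hrank).toAddEquiv⟩

theorem nonempty_addEquiv_zmod_two_prod [Finite N] {k : ℕ} (x : N) (hx : addOrderOf x = 2 ^ k)
    (hkill : ∀ y : N, 2 ^ k • y = 0) (hN : Nat.card N = 2 ^ (k + 1)) :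
    Nonempty (N ≃+ ZMod 2 × ZMod (2 ^ k)) := by
  obtain ⟨K, hK, ⟨e⟩⟩ := exists_addEquiv_zmod_addOrderOf_prod x (hx ▸ hkill)
  have hK2 : Nat.card K = 2 := by
    rw [hN, hx, pow_succ] at hK
    exact Nat.eq_of_mul_eq_mul_left (by positivity) hK
  obtain ⟨g, hg⟩ := (isAddCyclic_of_prime_card (p := 2) hK2).exists_generator
  let eK : ZMod 2 ≃+ K := zmodAddEquivOfGenerator hg hK2
  rw [hx] at e
  exact ⟨e.trans (((AddEquiv.refl _).prodCongr eK.symm).trans AddEquiv.prodComm)⟩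

theorem nonempty_addEquiv_of_card_eq_sixteen [Finite N] (hN : Nat.card N = 16)
    (hkill : ∀ y : N, 4 • y = 0) (x : N) (hx : addOrderOf x = 4) :
    Nonempty (N ≃+ ZMod 4 × ZMod 4) ∨ Nonempty (N ≃+ ZMod 2 × ZMod 2 × ZMod 4) := by
  obtain ⟨K, hK, ⟨e⟩⟩ := exists_addEquiv_zmod_addOrderOf_prod x (hx ▸ hkill)
  rw [hx] at e
  have hK4 : Nat.card K = 4 := by rw [hN, hx] at hK; omega
  by_cases hK2 : ∀ z : K, 2 • z = 0
  · obtain ⟨eK⟩ := nonempty_addEquiv_of_nsmul_eq_zero hK2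
      (by decide : ∀ z : ZMod 2 × ZMod 2, 2 • z = 0) (by simp [hK4])
    exact Or.inr ⟨e.trans ((((AddEquiv.refl _).prodCongr eK).trans AddEquiv.prodComm).trans
      AddEquiv.prodAssoc)⟩
  · push Not at hK2
    obtain ⟨z, hz⟩ := hK2
    have hz4 : addOrderOf z = Nat.card K := by
      rw [hK4]
      exact addOrderOf_eq_prime_pow (p := 2) (n := 1) hz (Subtype.ext (hkill z))
    obtain ⟨g, hg⟩ := (isAddCyclic_of_addOrderOf_eq_card z hz4).exists_generator
    exact Or.inl ⟨e.trans ((AddEquiv.refl _).prodCongr (zmodAddEquivOfGenerator hg hK4).symm)⟩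

theorem nonempty_addEquiv_of_card_eq_two_pow_of_le_four [Finite N] {n : ℕ} (hn : 2 ≤ n)
    (hn4 : n ≤ 4) (hN : Nat.card N = 2 ^ n) (hexp : ∀ y : N, 2 ^ (n - 2) • y = 0) :
    (3 ≤ n ∧ Nonempty (N ≃+ (ZMod 4 × ZMod (2 ^ (n - 2))))) ∨
    (3 ≤ n ∧ Nonempty (N ≃+ (ZMod 2 × ZMod 2 × ZMod (2 ^ (n - 2))))) ∨
    (4 ≤ n ∧ Nonempty (N ≃+ (ZMod 2 × ZMod 2 × ZMod 2 × ZMod (2 ^ (n - 3))))) := by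
  interval_cases n
  · have : Subsingleton N := ⟨fun a b => by simpa using (hexp a).trans (hexp b).symm⟩
    simp at hN
  · exact Or.inr (Or.inl ⟨le_rfl,
      nonempty_addEquiv_of_nsmul_eq_zero (p := 2) hexp (by decide) (by simp [hN])⟩)
  · by_cases h2 : ∀ y : N, 2 • y = 0
    · exact Or.inr (Or.inr ⟨le_rfl,
        nonempty_addEquiv_of_nsmul_eq_zero (p := 2) h2 (by decide) (by simp [hN])⟩)
    push Not at h2
    obtain ⟨y, hy⟩ := h2
    have hy4 : addOrderOf y = 4 :=
      addOrderOf_eq_prime_pow (p := 2) (n := 1) (by simpa using hy) (hexp y)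
    rcases nonempty_addEquiv_of_card_eq_sixteen hN hexp y hy4 with h | h
    · exact Or.inl ⟨by norm_num, h⟩
    · exact Or.inr (Or.inl ⟨by norm_num, h⟩)

end Classification

/-- Theorem 3.4: the possible additive groups of a quaternion or dihedral brace of
order `2 ^ n`. -/
theorem additive_group_of_quaternion_or_dihedral_brace (n : ℕ) (hn : 2 ≤ n)
    (N : Type) [AddCommGroup N] (hN : Nat.card N = 2 ^ n)
    (G : Subgroup (Hol N)) (hreg : IsRegularSubgroup G)
    (hiso : Nonempty (G ≃* QuaternionGroup (2 ^ (n - 2))) ∨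
            Nonempty (G ≃* DihedralGroup (2 ^ (n - 1)))) :
    Nonempty (N ≃+ ZMod (2 ^ n)) ∨
    Nonempty (N ≃+ (ZMod 2 × ZMod (2 ^ (n - 1)))) ∨
    (3 ≤ n ∧ Nonempty (N ≃+ (ZMod 4 × ZMod (2 ^ (n - 2))))) ∨
    (3 ≤ n ∧ Nonempty (N ≃+ (ZMod 2 × ZMod 2 × ZMod (2 ^ (n - 2))))) ∨
    (4 ≤ n ∧ Nonempty (N ≃+ (ZMod 2 × ZMod 2 × ZMod 2 × ZMod (2 ^ (n - 3))))) := by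
  have : Finite N := Nat.finite_of_card_ne_zero (by simp [hN])
  have hn1 : n - 1 + 1 = n := by omega
  have hn2 : n - 2 + 1 = n - 1 := by omega
  by_cases h1 : ∃ y : N, 2 ^ (n - 1) • y ≠ 0
  · obtain ⟨y, hy⟩ := h1
    have hy : addOrderOf y = Nat.card N := by
      rw [hN, ← hn1]
      exact addOrderOf_eq_prime_pow hy (by rw [hn1, ← hN]; exact card_nsmul_eq_zero')
    obtain ⟨g, hg⟩ := (isAddCyclic_of_addOrderOf_eq_card y hy).exists_generator
    exact Or.inl ⟨(zmodAddEquivOfGenerator hg hN).symm⟩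
  push Not at h1
  by_cases h2 : ∃ y : N, 2 ^ (n - 2) • y ≠ 0
  · obtain ⟨y, hy⟩ := h2
    have hy : addOrderOf y = 2 ^ (n - 1) := by
      rw [← hn2]
      exact addOrderOf_eq_prime_pow hy (by rw [hn2]; exact h1 y)
    exact Or.inr (Or.inl (nonempty_addEquiv_zmod_two_prod y hy h1 (hn1.symm ▸ hN)))
  push Not at h2
  obtain ⟨ρ, hρ⟩ := exists_orderOf_eq_two_pow_pred hn hiso
  have hn4 : n ≤ 4 := by
    by_contra! h5
    obtain ⟨y, hy⟩ := exists_two_pow_nsmul_ne_zero_of_isRegularSubgroup h5 hN hreg hρ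
    exact hy (h2 y)
  exact Or.inr (Or.inr (nonempty_addEquiv_of_card_eq_two_pow_of_le_four hn hn4 hN h2))
end

section
/- Let n ≥ 2 be an integer with n ≠ 3. Then the automorphism group of the generalised quaternion group Q_{2^n} of order 2^n (Mathlib's QuaternionGroup 2^{n-2}) has cardinality 2^{2n-3}. -/
/-!
An automorphism of `Q_{4m}` is determined by the images of the generators `a 1` and `xa 0`.
When `2m ≠ 4`, order considerations force `a 1 ↦ a u` with `u` a unit of `ZMod (2m)`, and
commutation with `a 1` rules out `xa 0 ↦ a k`, so `xa 0 ↦ xa j`. Conversely every pair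
`(u, j)` gives the automorphism `a i ↦ a (u i)`, `xa i ↦ xa (u i + j)`, so `Aut Q_{4m}` has
`φ(2m) · 2m` elements; for `m = 2^(n-2)` this is `2^(n-2) · 2^(n-1)`.
-/

theorem ZMod.coe_unit_mul_natCast_half {m : ℕ} (u : (ZMod (2 * m))ˣ) :
    (u : ZMod (2 * m)) * m = m := by
  rcases eq_or_ne m 0 with rfl | hm
  · simp
  have : NeZero (2 * m) := ⟨by positivity⟩
  obtain ⟨t, ht⟩ : Odd (u : ZMod (2 * m)).val :=
    ((ZMod.val_coe_unit_coprime u).coprime_dvd_right (dvd_mul_right 2 m)).odd_of_right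
  have h2m : (2 * m : ZMod (2 * m)) = 0 := by exact_mod_cast ZMod.natCast_self (2 * m)
  rw [← ZMod.natCast_zmod_val (u : ZMod (2 * m)), ht]
  push_cast
  linear_combination (t : ZMod (2 * m)) * h2m

namespace QuaternionGroup

variable {m : ℕ}

theorem a_pow (c : ZMod (2 * m)) (k : ℕ) :
    (a c : QuaternionGroup m) ^ k = a ((k : ZMod (2 * m)) * c) := by
  induction k with
  | zero => rw [pow_zero, Nat.cast_zero, zero_mul, a_zero]
  | succ k ih => rw [pow_succ, ih, a_mul_a]; congr 1; push_cast; ring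

def affineAut (u : (ZMod (2 * m))ˣ) (j : ZMod (2 * m)) : MulAut (QuaternionGroup m) where
  toFun
    | .a i => a ((u : ZMod (2 * m)) * i)
    | .xa i => xa ((u : ZMod (2 * m)) * i + j)
  invFun
    | .a i => a (u⁻¹ * i : ZMod (2 * m))
    | .xa i => xa (u⁻¹ * (i - j) : ZMod (2 * m))
  left_inv := by rintro (i | i) <;> simp
  right_inv := by rintro (i | i) <;> simp [mul_sub]
  map_mul' := by
    rintro (i | i) (k | k) <;> simp only [a_mul_a, a_mul_xa, xa_mul_a, xa_mul_xa] <;> congr 1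
    · ring
    · ring
    · ring
    -- `xa i * xa k = a (m + k - i)`, so this case needs `u * m = m`.
    · rw [mul_sub, mul_add, ZMod.coe_unit_mul_natCast_half]; ring

theorem affineAut_injective : Function.Injective (Function.uncurry (affineAut (m := m))) := by
  rintro ⟨u, j⟩ ⟨u', j'⟩ h
  have hu : a ((u : ZMod (2 * m)) * 1) = a ((u' : ZMod (2 * m)) * 1) := DFunLike.congr_fun h (a 1)
  have hj : xa ((u : ZMod (2 * m)) * 0 + j) = xa ((u' : ZMod (2 * m)) * 0 + j') :=
    DFunLike.congr_fun h (xa 0)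
  simp only [mul_one, mul_zero, zero_add, a.injEq, xa.injEq] at hu hj
  exact Prod.ext (Units.ext hu) hj

section

variable [NeZero m]

theorem exists_map_a_one_eq_a (hm2 : m ≠ 2) (φ : MulAut (QuaternionGroup m)) :
    ∃ i, φ (a 1) = a i := by
  cases hφ : φ (a 1) with
  | a i => exact ⟨i, rfl⟩
  | xa i =>
    have h := φ.orderOf_eq (a 1)
    rw [hφ, orderOf_xa, orderOf_a_one] at h
    omega

theorem isUnit_of_orderOf_a {i : ZMod (2 * m)} (h : orderOf (a i) = 2 * m) : IsUnit i := by
  rw [orderOf_a, Nat.div_eq_self] at h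
  have hgcd : Nat.gcd (2 * m) i.val = 1 := h.resolve_left (NeZero.ne _)
  rw [← ZMod.natCast_zmod_val i, ZMod.isUnit_iff_coprime]
  exact Nat.coprime_comm.mp hgcd

theorem exists_map_xa_zero_eq_xa (φ : MulAut (QuaternionGroup m)) {i : ZMod (2 * m)}
    (hi : φ (a 1) = a i) : ∃ j, φ (xa 0) = xa j := by
  cases hφ : φ (xa 0) with
  | xa j => exact ⟨j, rfl⟩
  | a k =>
    exfalso
    -- `a k` commutes with `a i`, so `xa 0` would commute with `a 1`, forcing `2 = 0`, i.e. `m = 1`.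
    have hcomm : xa 0 * a 1 = (a 1 * xa 0 : QuaternionGroup m) :=
      φ.injective (by rw [map_mul, map_mul, hi, hφ, a_mul_a, a_mul_a, add_comm])
    simp only [xa_mul_a, a_mul_xa, zero_add, zero_sub, xa.injEq] at hcomm
    have h2 : ((2 : ℕ) : ZMod (2 * m)) = 0 := by push_cast; linear_combination hcomm
    have hm1 : m = 1 := by
      have := Nat.le_of_dvd two_pos ((ZMod.natCast_eq_zero_iff 2 (2 * m)).mp h2)
      have := NeZero.ne m
      omega
    -- but then `a k` has order dividing `2`, while `xa 0` has order `4`.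
    have h4 : orderOf (a k : QuaternionGroup m) = 4 := by rw [← hφ, φ.orderOf_eq, orderOf_xa]
    have hdvd : orderOf (a k : QuaternionGroup m) ∣ 2 * m :=
      orderOf_dvd_of_pow_eq_one (by rw [a_pow, ZMod.natCast_self, zero_mul, a_zero])
    rw [h4, hm1] at hdvd
    norm_num at hdvd

theorem eq_affineAut (φ : MulAut (QuaternionGroup m)) {u : (ZMod (2 * m))ˣ} {j : ZMod (2 * m)}
    (hu : φ (a 1) = a u) (hj : φ (xa 0) = xa j) : φ = affineAut u j := by
  have ha : ∀ c : ZMod (2 * m), φ (a c) = a ((u : ZMod (2 * m)) * c) := fun c => by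
    rw [← ZMod.natCast_zmod_val c, ← a_one_pow, map_pow, hu, a_pow, mul_comm]
  ext (c | c)
  · exact ha c
  · have hxa : φ (xa c) = φ (xa 0) * φ (a c) := by rw [← map_mul, xa_mul_a, zero_add]
    rw [hxa, hj, ha, xa_mul_a, add_comm]
    rfl

theorem affineAut_surjective (hm2 : m ≠ 2) :
    Function.Surjective (Function.uncurry (affineAut (m := m))) := by
  intro φ
  obtain ⟨i, hi⟩ := exists_map_a_one_eq_a hm2 φ
  obtain ⟨u, rfl⟩ : IsUnit i :=
    isUnit_of_orderOf_a (by rw [← hi, φ.orderOf_eq, orderOf_a_one])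
  obtain ⟨j, hj⟩ := exists_map_xa_zero_eq_xa φ hi
  exact ⟨(u, j), (eq_affineAut φ hi hj).symm⟩

theorem card_mulAut (hm2 : m ≠ 2) :
    Nat.card (MulAut (QuaternionGroup m)) = Nat.totient (2 * m) * (2 * m) := by
  rw [← Nat.card_eq_of_bijective _ ⟨affineAut_injective, affineAut_surjective hm2⟩,
    Nat.card_prod, Nat.card_eq_fintype_card, ZMod.card_units_eq_totient, Nat.card_zmod]

end

end QuaternionGroup

/-- Proposition 3.3 (quaternion case): for `n ≥ 2`, `n ≠ 3`, the generalised
quaternion group of order `2 ^ n` has exactly `2 ^ (2n - 3)` automorphisms. -/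
theorem card_mulAut_quaternionGroup (n : ℕ) (hn : 2 ≤ n) (hn3 : n ≠ 3) :
    Nat.card (MulAut (QuaternionGroup (2 ^ (n - 2)))) = 2 ^ (2 * n - 3) := by
  have hm2 : 2 ^ (n - 2) ≠ 2 := fun h =>
    hn3 (by have := Nat.pow_right_injective le_rfl (h.trans (pow_one 2).symm); omega)
  have htwo_mul : 2 * 2 ^ (n - 2) = 2 ^ (n - 1) := by rw [← pow_succ']; congr 1; omega
  rw [QuaternionGroup.card_mulAut hm2, htwo_mul, Nat.totient_prime_pow Nat.prime_two (by omega),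
    Nat.add_one_sub_one, mul_one, ← pow_add]
  congr 1
  omega
end

section
/- Let n ≥ 3 be an integer. Then the automorphism group of the dihedral group D_{2^n} of order 2^n (Mathlib's DihedralGroup 2^{n-1}) has cardinality 2^{2n-3}. -/
/-!
An automorphism of `D_{2m}` (`m ≠ 2`) must send the rotation `r 1`, of order `m`, to an element of
order `m`; reflections have order `2`, so it goes to a rotation `r a`, and `a` is a unit because the
inverse automorphism does the same. Rotations then go to rotations, hence reflections to
reflections, and the automorphism is the affine map `r i ↦ r (a i)`, `sr i ↦ sr (a i + b)` with
`sr b` the image of `sr 0`. So `Aut D_{2m} ≃ (ℤ/m)ˣ × ℤ/m` has `m φ(m)` elements, which is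
`2^(n-1) · 2^(n-2)` for `m = 2^(n-1)`.
-/

namespace DihedralGroup

variable {n : ℕ}

theorem r_eq_r_one_pow [NeZero n] (i : ZMod n) : r i = (r 1 : DihedralGroup n) ^ i.val := by
  rw [r_one_pow, ZMod.natCast_zmod_val]

def affineAut (a : (ZMod n)ˣ) (b : ZMod n) : MulAut (DihedralGroup n) where
  toFun
    | r i => r (a * i)
    | sr i => sr (a * i + b)
  invFun
    | r i => r (a⁻¹.val * i)
    | sr i => sr (a⁻¹.val * (i - b))
  left_inv := by
    rintro (i | i) <;> simp [← mul_assoc]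
  right_inv := by
    rintro (i | i) <;> simp [← mul_assoc, mul_sub]
  map_mul' := by
    rintro (i | i) (j | j) <;> simp <;> ring

@[simp]
theorem affineAut_r (a : (ZMod n)ˣ) (b i : ZMod n) :
    affineAut a b (r i) = r ((a : ZMod n) * i) := rfl

@[simp]
theorem affineAut_sr (a : (ZMod n)ˣ) (b i : ZMod n) :
    affineAut a b (sr i) = sr ((a : ZMod n) * i + b) := rfl

theorem affineAut_injective : (Function.uncurry (affineAut (n := n))).Injective := by
  rintro ⟨a, b⟩ ⟨a', b'⟩ h
  have hr := DFunLike.congr_fun h (r 1)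
  have hsr := DFunLike.congr_fun h (sr 0)
  simp only [Function.uncurry_apply_pair, affineAut_r, affineAut_sr, mul_one, mul_zero,
    zero_add, r.injEq, sr.injEq] at hr hsr
  exact Prod.ext (Units.ext hr) hsr

theorem exists_mulAut_apply_r_one (hn : n ≠ 2) (f : MulAut (DihedralGroup n)) :
    ∃ c, f (r 1) = r c := by
  cases hf : f (r 1) with
  | r c => exact ⟨c, rfl⟩
  | sr c =>
    have := MulEquiv.orderOf_eq f (r 1)
    rw [hf, orderOf_sr, orderOf_r_one] at this
    exact absurd this.symm hn

theorem mulAut_apply_r [NeZero n] (f : MulAut (DihedralGroup n)) {c : ZMod n}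
    (hc : f (r 1) = r c) (i : ZMod n) : f (r i) = r (c * i) := by
  rw [r_eq_r_one_pow i, map_pow, hc, r_pow, ZMod.natCast_zmod_val]

theorem exists_unit_mulAut_apply_r [NeZero n] (hn : n ≠ 2) (f : MulAut (DihedralGroup n)) :
    ∃ a : (ZMod n)ˣ, ∀ i, f (r i) = r ((a : ZMod n) * i) := by
  obtain ⟨c, hc⟩ := exists_mulAut_apply_r_one hn f
  obtain ⟨d, hd⟩ := exists_mulAut_apply_r_one hn f⁻¹
  have hcd : c * d = 1 := by
    have h := mulAut_apply_r f hc d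
    rw [← hd, MulAut.apply_inv_self, r.injEq] at h
    exact h.symm
  exact ⟨Units.mkOfMulEqOne c d hcd, mulAut_apply_r f hc⟩

theorem affineAut_surjective [NeZero n] (hn : n ≠ 2) :
    (Function.uncurry (affineAut (n := n))).Surjective := by
  intro f
  obtain ⟨a, ha⟩ := exists_unit_mulAut_apply_r hn f
  obtain ⟨b, hb⟩ : ∃ b, f (sr 0) = sr b := by
    cases hf : f (sr 0) with
    | sr b => exact ⟨b, rfl⟩
    | r d =>
      have h : f (r (a⁻¹.val * d)) = f (sr 0) := by
        rw [ha, hf, ← mul_assoc, Units.mul_inv, one_mul]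
      exact absurd (f.injective h) (by simp)
  refine ⟨(a, b), MulEquiv.ext ?_⟩
  rintro (i | i)
  · simp [ha]
  · have hi : (sr i : DihedralGroup n) = sr 0 * r i := by rw [sr_mul_r, zero_add]
    rw [Function.uncurry_apply_pair, affineAut_sr, hi, map_mul, hb, ha, sr_mul_r, add_comm]

theorem card_mulAut [NeZero n] (hn : n ≠ 2) :
    Nat.card (MulAut (DihedralGroup n)) = n * n.totient := by
  rw [← Nat.card_congr (Equiv.ofBijective _ ⟨affineAut_injective, affineAut_surjective hn⟩),
    Nat.card_prod, Nat.card_eq_fintype_card, ZMod.card_units_eq_totient, Nat.card_zmod, mul_comm]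

end DihedralGroup

/-- Proposition 3.3 (dihedral case): for `n ≥ 3`, the dihedral group of order
`2 ^ n` has exactly `2 ^ (2n - 3)` automorphisms. -/
theorem card_mulAut_dihedralGroup (n : ℕ) (hn : 3 ≤ n) :
    Nat.card (MulAut (DihedralGroup (2 ^ (n - 1)))) = 2 ^ (2 * n - 3) := by
  have hne : 2 ^ (n - 1) ≠ 2 := by
    intro h
    have := Nat.pow_right_injective le_rfl (h.trans (pow_one 2).symm)
    omega
  rw [DihedralGroup.card_mulAut hne, Nat.totient_prime_pow Nat.prime_two (by omega),
    Nat.add_one_sub_one, mul_one, ← pow_add]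
  congr 1
  omega
end

section
/- Let n ≥ 2 be an integer and let s be an odd positive integer. Then the generalised quaternion group Q_{2^n s} of order 2^n s (QuaternionGroup (2^{n-2}·s)) has exactly one subgroup of cardinality s, and the dihedral group D_{2^n s} of order 2^n s (DihedralGroup (2^{n-1}·s)) has exactly one subgroup of cardinality s; in each case this subgroup is the cyclic subgroup generated by x^{2^{n-1}}, where x is the distinguished element of order 2^{n-1}s. -/
/-!
Every element of a subgroup of odd order `s` has odd order. In both groups the elements outside
`⟨x⟩` have order 2 or 4, so such a subgroup lies in the cyclic group `⟨x⟩` of order `2^(n-1) s`,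
whose only subgroup of order `s` is `⟨x ^ 2^(n-1)⟩`.
-/

section OddPart

variable {G : Type*} [Group G] {x g : G} {k s : ℕ}

theorem card_zpowers_pow_of_orderOf_eq_mul (hx : orderOf x = k * s) (hk : k ≠ 0) :
    Nat.card (Subgroup.zpowers (x ^ k)) = s := by
  rw [Nat.card_zpowers, orderOf_pow_of_dvd hk (hx ▸ dvd_mul_right k s), hx,
    Nat.mul_div_cancel_left s (Nat.pos_of_ne_zero hk)]

theorem mem_zpowers_pow_of_pow_eq_one (hx : orderOf x = k * s) (hs : s ≠ 0)
    (hg : g ∈ Subgroup.zpowers x) (hgs : g ^ s = 1) : g ∈ Subgroup.zpowers (x ^ k) := by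
  obtain ⟨j, rfl⟩ := hg
  have hks : ((k * s : ℕ) : ℤ) ∣ j * s := by
    rw [← hx, orderOf_dvd_iff_zpow_eq_one, zpow_mul, zpow_natCast, hgs]
  obtain ⟨t, rfl⟩ : (k : ℤ) ∣ j := by
    push_cast at hks
    exact (mul_dvd_mul_iff_right (by exact_mod_cast hs)).mp hks
  exact ⟨t, by simp only [zpow_mul, zpow_natCast]⟩

theorem card_eq_iff_eq_zpowers_pow [Finite G] (hx : orderOf x = k * s) (hs : Odd s)
    (hodd : ∀ g : G, Odd (orderOf g) → g ∈ Subgroup.zpowers x) (H : Subgroup G) :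
    Nat.card H = s ↔ H = Subgroup.zpowers (x ^ k) := by
  have hk : k ≠ 0 := by
    rintro rfl
    exact (orderOf_pos x).ne' (by simpa using hx)
  have hcard := card_zpowers_pow_of_orderOf_eq_mul hx hk
  refine ⟨fun hH => Subgroup.eq_of_le_of_card_ge (fun g hg => ?_) (by rw [hH, hcard]),
    fun hH => hH ▸ hcard⟩
  have hgs : orderOf g ∣ s := hH ▸ Subgroup.orderOf_mk g hg ▸ orderOf_dvd_natCard _
  exact mem_zpowers_pow_of_pow_eq_one hx hs.pos.ne' (hodd g (hs.of_dvd_nat hgs))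
    (orderOf_dvd_iff_pow_eq_one.mp hgs)

end OddPart

theorem QuaternionGroup.mem_zpowers_a_one_of_odd_orderOf {n : ℕ} [NeZero n]
    {g : QuaternionGroup n} (hg : Odd (orderOf g)) : g ∈ Subgroup.zpowers (a 1) := by
  cases g with
  | a i =>
    rw [← ZMod.natCast_zmod_val i, ← a_one_pow]
    exact Subgroup.npow_mem_zpowers _ _
  | xa i => rw [orderOf_xa] at hg; exact absurd hg (by decide)

theorem DihedralGroup.mem_zpowers_r_one_of_odd_orderOf {n : ℕ}
    {g : DihedralGroup n} (hg : Odd (orderOf g)) : g ∈ Subgroup.zpowers (r 1) := by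
  cases g with
  | r i =>
    rw [← ZMod.intCast_zmod_cast i, ← r_one_zpow]
    exact Subgroup.zpow_mem_zpowers _ _
  | sr i => rw [orderOf_sr] at hg; exact absurd hg (by decide)

theorem unique_subgroup_of_card_odd_part_general (n s : ℕ) (hn : 2 ≤ n) (hs : Odd s) :
    (∀ H : Subgroup (QuaternionGroup (2 ^ (n - 2) * s)),
      Nat.card H = s ↔ H = Subgroup.zpowers ((QuaternionGroup.a 1) ^ 2 ^ (n - 1))) ∧
    (∀ H : Subgroup (DihedralGroup (2 ^ (n - 1) * s)),
      Nat.card H = s ↔ H = Subgroup.zpowers ((DihedralGroup.r 1) ^ 2 ^ (n - 1))) := by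
  have : NeZero s := ⟨hs.pos.ne'⟩
  have hpow : 2 * 2 ^ (n - 2) = 2 ^ (n - 1) := by
    rw [← pow_succ']
    congr 1
    omega
  constructor
  · refine card_eq_iff_eq_zpowers_pow ?_ hs
      (fun _ => QuaternionGroup.mem_zpowers_a_one_of_odd_orderOf)
    rw [QuaternionGroup.orderOf_a_one, ← mul_assoc, hpow]
  · exact card_eq_iff_eq_zpowers_pow DihedralGroup.orderOf_r_one hs
      (fun _ => DihedralGroup.mem_zpowers_r_one_of_odd_orderOf)

/-- Lemma 11.1: for `n ≥ 2` and `s` odd, the generalised quaternion group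
`Q_{2^n s}` (resp. the dihedral group `D_{2^n s}`) has exactly one subgroup of
cardinality `s`, namely the cyclic subgroup generated by `x ^ (2^(n-1))`, where `x`
is the distinguished element of order `2^(n-1) s`. -/
theorem unique_subgroup_of_card_odd_part (n s : ℕ) (hn : 2 ≤ n) (hs : Odd s)
    (hs' : 0 < s) :
    (∀ H : Subgroup (QuaternionGroup (2 ^ (n - 2) * s)),
      Nat.card H = s ↔ H = Subgroup.zpowers ((QuaternionGroup.a 1) ^ 2 ^ (n - 1))) ∧
    (∀ H : Subgroup (DihedralGroup (2 ^ (n - 1) * s)),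
      Nat.card H = s ↔ H = Subgroup.zpowers ((DihedralGroup.r 1) ^ 2 ^ (n - 1))) :=
  unique_subgroup_of_card_odd_part_general n s hn hs
end
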